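/- Let M be a deterministic program with high-security input H, low-security input L, and low-security output O, and let μ be a probability distribution on ℍ × 𝕃 with μ(h,ℓ) > 0 for all h ∈ ℍ and ℓ ∈ 𝕃. Then M is non-interferent if and only if GE[μ](M) ≤ 0. -/

import Mathlib

/-!
Write `𝓖(p) = Σ_x (rank x + 1) · p x` for the guessing entropy of an unnormalised weight `p`, the
rank being taken in the enumeration that sorts `p` decreasingly. By the rearrangement inequality
this enumeration minimises `Σ_x (e x + 1) · p x` over all enumerations `e`, and `𝓖` is positively
homogeneous, so `GE[μ](M) = Σ_ℓ (𝓖(μ(·,ℓ)) − Σ_o 𝓖(μ(·,ℓ) · [M(·,ℓ) = o]))`. Guessing each fiber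
`M(·,ℓ) = o` in the order that is optimal for `μ(·,ℓ)`, skipping the other fibers, shows that every
summand is `≥ 0`; when `M(·,ℓ)` is not constant some element is skipped, and since `μ > 0` the
summand is then `> 0`.
-/

/-- Guessing entropy of a (sub)distribution `p` on a finite type `X`:
`𝓖(p) = Σ_{1≤i≤m} i · p(x_i)` where `x_1, …, x_m` enumerates `X` so that
`p(x_i) ≥ p(x_j)` whenever `i ≤ j` (obtained by sorting `p` decreasingly). -/
noncomputable def guess {X : Type*} [Fintype X] (p : X → ℝ) : ℝ :=
  ∑ i : Fin (Fintype.card X), ((i : ℕ) + 1 : ℝ) *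
    p ((Fintype.equivFin X).symm
      (Tuple.sort (fun j => -p ((Fintype.equivFin X).symm j)) i))

variable {Hi Li Oi : Type*}

/-- Marginal probability `μ(L = ℓ)`. -/
noncomputable def pL [Fintype Hi] (μ : Hi × Li → ℝ) (ℓ : Li) : ℝ := ∑ h, μ (h, ℓ)

/-- Joint probability `μ(O = o, L = ℓ)` where `O = M(H,L)`. -/
noncomputable def pOL [Fintype Hi] [DecidableEq Oi] (M : Hi × Li → Oi) (μ : Hi × Li → ℝ)
    (o : Oi) (ℓ : Li) : ℝ := ∑ h, if M (h, ℓ) = o then μ (h, ℓ) else 0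

/-- Conditional guessing entropy `𝓖[μ](H|L) = Σ_ℓ μ(L=ℓ) · 𝓖[μ](H|L=ℓ)`. -/
noncomputable def condGuessHL [Fintype Hi] [Fintype Li] (μ : Hi × Li → ℝ) : ℝ :=
  ∑ ℓ : Li, pL μ ℓ * guess (fun h : Hi => μ (h, ℓ) / pL μ ℓ)

/-- Conditional guessing entropy `𝓖[μ](H|O,L)` where `O = M(H,L)`. -/
noncomputable def condGuessHOL [Fintype Hi] [Fintype Li] [Fintype Oi] [DecidableEq Oi]
    (M : Hi × Li → Oi) (μ : Hi × Li → ℝ) : ℝ :=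
  ∑ ℓ : Li, ∑ o : Oi, pOL M μ o ℓ *
    guess (fun h : Hi => (if M (h, ℓ) = o then μ (h, ℓ) else 0) / pOL M μ o ℓ)

/-- Guessing-entropy-based quantitative information flow
`GE[μ](M) = 𝓖[μ](H|L) − 𝓖[μ](H|O,L)`. -/
noncomputable def GE [Fintype Hi] [Fintype Li] [Fintype Oi] [DecidableEq Oi]
    (M : Hi × Li → Oi) (μ : Hi × Li → ℝ) : ℝ :=
  condGuessHL μ - condGuessHOL M μ

open Finset Function

section Rank

variable {X α : Type*} [Fintype X] [LinearOrder α]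

def rankBy (r : X → α) (x : X) : ℕ := #{y | r y < r x}

lemma rankBy_lt_card (r : X → α) (x : X) : rankBy r x < Fintype.card X :=
  card_lt_univ_of_notMem (x := x) (by simp)

lemma rankBy_lt_rankBy {r : X → α} {x y : X} (h : r x < r y) : rankBy r x < rankBy r y :=
  card_lt_card <| (ssubset_iff_of_subset <| monotone_filter_right _ fun _ _ hz => hz.trans h).mpr
    ⟨x, by simpa, by simp⟩

lemma rankBy_injective {r : X → α} (hr : Injective r) : Injective (rankBy r) := by
  intro x y hxy
  by_contra hne
  rcases (hr.ne hne).lt_or_gt with h | h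
  · exact (rankBy_lt_rankBy h).ne hxy
  · exact (rankBy_lt_rankBy h).ne' hxy

lemma rankBy_equiv (e : X ≃ Fin (Fintype.card X)) (x : X) : rankBy e x = e x := by
  rw [rankBy, card_equiv e (t := Iio (e x)) (by simp), Fin.card_Iio]

lemma card_filter_and_lt_le_rankBy (P : X → Prop) [DecidablePred P] (r : X → α) (x : X) :
    #{y | P y ∧ r y < r x} ≤ rankBy r x :=
  card_le_card <| monotone_filter_right _ fun _ _ hz => hz.2

lemma card_filter_and_lt_lt_rankBy {P : X → Prop} [DecidablePred P] {r : X → α} {x : X}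
    (h : ∃ y, ¬P y ∧ r y < r x) : #{y | P y ∧ r y < r x} < rankBy r x := by
  obtain ⟨y, hPy, hy⟩ := h
  exact card_lt_card <| (ssubset_iff_of_subset <| monotone_filter_right _ fun _ _ hz => hz.2).mpr
    ⟨y, by simpa, by simp [hPy]⟩

end Rank

section Guess

variable {X : Type*} [Fintype X]

lemma exists_guess_eq_sum_equiv (p : X → ℝ) :
    ∃ e : X ≃ Fin (Fintype.card X), guess p = ∑ x, ((e x : ℕ) + 1 : ℝ) * p x := by
  set E := Fintype.equivFin X
  set s := Tuple.sort fun j => -p (E.symm j)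
  refine ⟨E.trans s.symm, ?_⟩
  rw [← (E.trans s.symm).symm.sum_comp]
  simp [guess, E, s]

lemma guess_le_sum_equiv (p : X → ℝ) (e : X ≃ Fin (Fintype.card X)) :
    guess p ≤ ∑ x, ((e x : ℕ) + 1 : ℝ) * p x := by
  set E := Fintype.equivFin X
  set s := Tuple.sort fun j => -p (E.symm j)
  have hanti : Antivary (fun i : Fin (Fintype.card X) => ((i : ℕ) + 1 : ℝ))
      fun i => p (E.symm (s i)) :=
    Monotone.antivary (fun i j h => by simpa using h)
      fun i j h => neg_le_neg_iff.mp <|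
        show -p _ ≤ -p _ from Tuple.monotone_sort (fun j => -p (E.symm j)) h
  calc guess p = ∑ i : Fin _, ((i : ℕ) + 1 : ℝ) • p (E.symm (s i)) := rfl
    _ ≤ ∑ i : Fin _, ((i : ℕ) + 1 : ℝ) • p (E.symm (s ((e.symm.trans E).trans s.symm i))) :=
      hanti.sum_smul_le_sum_smul_comp_perm
    _ = ∑ i : Fin _, ((i : ℕ) + 1 : ℝ) * p (e.symm i) := by simp
    _ = ∑ x, ((e x : ℕ) + 1 : ℝ) * p x := by
      rw [← e.sum_comp]; simp

lemma guess_le_sum_rankBy {α : Type*} [LinearOrder α] (p : X → ℝ) {r : X → α}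
    (hr : Injective r) : guess p ≤ ∑ x, ((rankBy r x : ℝ) + 1) * p x :=
  guess_le_sum_equiv p <| Equiv.ofBijective (fun x => ⟨rankBy r x, rankBy_lt_card r x⟩) <|
    (Fintype.bijective_iff_injective_and_card _).mpr
      ⟨fun _ _ h => rankBy_injective hr (Fin.mk.inj_iff.mp h), (Fintype.card_fin _).symm⟩

lemma guess_const_mul {c : ℝ} (hc : 0 ≤ c) (p : X → ℝ) :
    guess (fun x => c * p x) = c * guess p := by
  obtain ⟨e, he⟩ := exists_guess_eq_sum_equiv p
  obtain ⟨e', he'⟩ := exists_guess_eq_sum_equiv fun x => c * p x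
  apply le_antisymm
  · calc guess (fun x => c * p x) ≤ ∑ x, ((e x : ℕ) + 1 : ℝ) * (c * p x) :=
          guess_le_sum_equiv _ e
      _ = c * guess p := by
          rw [he, mul_sum]
          exact sum_congr rfl fun x _ => by ring
  · calc c * guess p ≤ c * ∑ x, ((e' x : ℕ) + 1 : ℝ) * p x :=
          mul_le_mul_of_nonneg_left (guess_le_sum_equiv p e') hc
      _ = guess (fun x => c * p x) := by
          rw [he', mul_sum]
          exact sum_congr rfl fun x _ => by ring

lemma guess_zero : guess (fun _ : X => (0 : ℝ)) = 0 := by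
  simp [guess]

lemma sum_mul_guess_div_sum {q : X → ℝ} (hq : ∀ x, 0 ≤ q x) :
    (∑ x, q x) * guess (fun x => q x / ∑ y, q y) = guess q := by
  rcases (sum_nonneg fun x _ => hq x).eq_or_lt with h0 | hpos
  · have hq0 : q = fun _ => 0 :=
      funext fun x => (sum_eq_zero_iff_of_nonneg fun y _ => hq y).mp h0.symm x (mem_univ x)
    rw [← h0, zero_mul, hq0, guess_zero]
  · rw [← guess_const_mul hpos.le]
    congr 1
    funext x
    field_simp

end Guess

section Fibers

variable {X O : Type*} [Fintype X] [Fintype O] [DecidableEq O]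

lemma sum_guess_fiber_le_sum_rank {α : Type*} [LinearOrder α] (p : X → ℝ) (c : X → O)
    {r : X → α} (hr : Injective r) :
    ∑ o, guess (fun x => if c x = o then p x else 0) ≤
      ∑ x, ((#{y | c y = c x ∧ r y < r x} : ℝ) + 1) * p x := by
  have hfiber (o : O) : guess (fun x => if c x = o then p x else 0) ≤
      ∑ x, if c x = o then ((#{y | c y = o ∧ r y < r x} : ℝ) + 1) * p x else 0 := by
    -- guess the fiber of `o` first, in the order `r`
    let key : X → Bool ×ₗ α := fun x => toLex (decide (c x ≠ o), r x)
    have hkey : Injective key := fun x y h => hr (Prod.ext_iff.mp (toLex.injective h)).2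
    refine (guess_le_sum_rankBy _ hkey).trans_eq (sum_congr rfl fun x _ => ?_)
    split_ifs with hx
    · have hrank : rankBy key x = #{y | c y = o ∧ r y < r x} := by
        rw [rankBy]
        congr 1
        ext y
        simp [key, Prod.Lex.toLex_lt_toLex, hx]
      rw [hrank]
    · exact mul_zero _
  calc ∑ o, guess (fun x => if c x = o then p x else 0)
      ≤ ∑ o, ∑ x, if c x = o then ((#{y | c y = o ∧ r y < r x} : ℝ) + 1) * p x else 0 :=
        sum_le_sum fun o _ => hfiber o
    _ = ∑ x, ((#{y | c y = c x ∧ r y < r x} : ℝ) + 1) * p x := by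
        rw [sum_comm]
        simp only [sum_ite_eq, mem_univ, if_true]

lemma sum_guess_fiber_le_guess {p : X → ℝ} (hp : ∀ x, 0 ≤ p x) (c : X → O) :
    ∑ o, guess (fun x => if c x = o then p x else 0) ≤ guess p := by
  obtain ⟨e, he⟩ := exists_guess_eq_sum_equiv p
  refine (sum_guess_fiber_le_sum_rank p c e.injective).trans (he ▸ sum_le_sum fun x _ => ?_)
  gcongr
  · exact hp x
  · exact_mod_cast (card_filter_and_lt_le_rankBy _ e x).trans_eq (rankBy_equiv e x)

lemma sum_guess_fiber_lt_guess {p : X → ℝ} (hp : ∀ x, 0 < p x) {c : X → O}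
    (hc : ∃ x y, c x ≠ c y) :
    ∑ o, guess (fun x => if c x = o then p x else 0) < guess p := by
  obtain ⟨e, he⟩ := exists_guess_eq_sum_equiv p
  obtain ⟨a, b, hba, hab⟩ : ∃ a b, c b ≠ c a ∧ e b < e a := by
    obtain ⟨x, y, hxy⟩ := hc
    rcases (e.injective.ne (ne_of_apply_ne c hxy)).lt_or_gt with h | h
    · exact ⟨y, x, hxy, h⟩
    · exact ⟨x, y, hxy.symm, h⟩
  refine (sum_guess_fiber_le_sum_rank p c e.injective).trans_lt
    (he ▸ sum_lt_sum (fun x _ => ?_) ⟨a, mem_univ a, ?_⟩)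
  · gcongr
    · exact (hp x).le
    · exact_mod_cast (card_filter_and_lt_le_rankBy _ e x).trans_eq (rankBy_equiv e x)
  · gcongr
    · exact hp a
    · exact_mod_cast (card_filter_and_lt_lt_rankBy ⟨b, hba, hab⟩).trans_eq (rankBy_equiv e a)

lemma sum_guess_fiber_of_forall_eq (p : X → ℝ) {c : X → O} (hc : ∀ x y, c x = c y) :
    ∑ o, guess (fun x => if c x = o then p x else 0) = guess p := by
  rcases isEmpty_or_nonempty X with hX | ⟨⟨x₀⟩⟩
  · have : IsEmpty (Fin (Fintype.card X)) := by rw [Fintype.card_eq_zero]; infer_instance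
    simp [guess]
  rw [sum_eq_single (c x₀) (fun o _ ho => ?_) (by simp)]
  · exact congr_arg guess (funext fun x => if_pos (hc x x₀))
  · refine (congr_arg guess (funext fun x => ?_)).trans guess_zero
    exact if_neg fun h => ho (h.symm.trans (hc x x₀))

end Fibers

lemma GE_eq_sum_sub [Fintype Hi] [Fintype Li] [Fintype Oi] [DecidableEq Oi]
    (M : Hi × Li → Oi) {μ : Hi × Li → ℝ} (hμ : ∀ x, 0 ≤ μ x) :
    GE M μ = ∑ ℓ, (guess (fun h => μ (h, ℓ)) -
      ∑ o, guess (fun h => if M (h, ℓ) = o then μ (h, ℓ) else 0)) := by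
  have hfiber (ℓ : Li) (o : Oi) (h : Hi) : 0 ≤ if M (h, ℓ) = o then μ (h, ℓ) else 0 := by
    split_ifs
    exacts [hμ _, le_rfl]
  rw [GE, condGuessHL, condGuessHOL, ← sum_sub_distrib]
  refine sum_congr rfl fun ℓ _ => ?_
  rw [pL, sum_mul_guess_div_sum fun h => hμ (h, ℓ)]
  congr 1
  exact sum_congr rfl fun o _ => sum_mul_guess_div_sum (hfiber ℓ o)

lemma GE_eq_zero_of_noninterferent [Fintype Hi] [Fintype Li] [Fintype Oi] [DecidableEq Oi]
    {M : Hi × Li → Oi} {μ : Hi × Li → ℝ} (hμ : ∀ x, 0 ≤ μ x)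
    (hM : ∀ h h' ℓ, M (h, ℓ) = M (h', ℓ)) : GE M μ = 0 := by
  rw [GE_eq_sum_sub M hμ]
  exact sum_eq_zero fun ℓ _ => by
    rw [sum_guess_fiber_of_forall_eq _ fun h h' => hM h h' ℓ, sub_self]

lemma GE_pos_of_interferent [Fintype Hi] [Fintype Li] [Fintype Oi] [DecidableEq Oi]
    {M : Hi × Li → Oi} {μ : Hi × Li → ℝ} (hμ : ∀ x, 0 < μ x)
    (hM : ∃ h h' ℓ, M (h, ℓ) ≠ M (h', ℓ)) : 0 < GE M μ := by
  obtain ⟨h, h', ℓ, hne⟩ := hM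
  rw [GE_eq_sum_sub M fun x => (hμ x).le]
  exact sum_pos' (fun ℓ _ => sub_nonneg.mpr (sum_guess_fiber_le_guess (fun _ => (hμ _).le) _))
    ⟨ℓ, mem_univ ℓ, sub_pos.mpr (sum_guess_fiber_lt_guess (fun _ => hμ _) ⟨h, h', hne⟩)⟩

theorem noninterferent_iff_GE_le_zero
    [Fintype Hi] [Fintype Li] [Fintype Oi] [DecidableEq Oi]
    (M : Hi × Li → Oi) (μ : Hi × Li → ℝ)
    (hpos : ∀ x, 0 < μ x) :
    (∀ (h h' : Hi) (ℓ : Li), M (h, ℓ) = M (h', ℓ)) ↔ GE M μ ≤ 0 := by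
  refine ⟨fun hM => (GE_eq_zero_of_noninterferent (fun x => (hpos x).le) hM).le, fun hGE => ?_⟩
  by_contra hM
  push Not at hM
  exact hGE.not_gt (GE_pos_of_interferent hpos hM)
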